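/- arXiv:1504.06010 — 3 statements merged into one kernel-verified Lean document; each statement's English description precedes it below -/
import Mathlib

section
/- Let Y be {0,1}-valued with 0 < P(Y=1) < 1, X a random vector with finitely many values, and suppose E[Y | X] = Σᵢ fᵢ(Xᵢ) almost surely for some functions fᵢ of the individual coordinates, where the sum has positive variance. Then ρ_m(X,Y) equals the restricted maximal correlation ρ_m^lb(X,Y) obtained by restricting f in the definition to additively separable functions f(x) = Σᵢ ξᵢ(xᵢ). -/
/-!
Let `W = E[Y | X]`. Since `Y` is binary, every `g(Y)` is affine in `Y`, so for standardized
`F(X)` and `g(Y)` the tower property gives `E[F(X) g(Y)] = c · Cov(F(X), W)` with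
`c² Var Y = 1`, and Cauchy–Schwarz bounds this by `√(Var W / Var Y)`. The bound is attained by
the standardizations of `W` and `Y`, and the standardization of `W` is additively separable
because `W` is.
-/

open MeasureTheory ProbabilityTheory

section CauchySchwarz

variable {Ω : Type*} {mΩ : MeasurableSpace Ω} {μ : Measure Ω}

theorem sq_integral_mul_le_integral_sq_mul_integral_sq {u v : Ω → ℝ} (hu : MemLp u 2 μ)
    (hv : MemLp v 2 μ) :
    (∫ ω, u ω * v ω ∂μ) ^ 2 ≤ (∫ ω, u ω ^ 2 ∂μ) * ∫ ω, v ω ^ 2 ∂μ := by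
  have huv : Integrable (fun ω => u ω * v ω) μ := hu.integrable_mul hv
  have hquad : ∀ t : ℝ, 0 ≤ (∫ ω, v ω ^ 2 ∂μ) * (t * t) + 2 * (∫ ω, u ω * v ω ∂μ) * t
      + ∫ ω, u ω ^ 2 ∂μ := by
    intro t
    have hexpand : ∫ ω, (t * v ω + u ω) ^ 2 ∂μ = (∫ ω, v ω ^ 2 ∂μ) * (t * t)
        + 2 * (∫ ω, u ω * v ω ∂μ) * t + ∫ ω, u ω ^ 2 ∂μ := by
      have hpt : (fun ω => (t * v ω + u ω) ^ 2)
          = fun ω => (t * t) * v ω ^ 2 + (2 * t) * (u ω * v ω) + u ω ^ 2 := by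
        funext ω; ring
      rw [hpt, integral_add, integral_add, integral_const_mul, integral_const_mul]
      · ring
      exacts [hv.integrable_sq.const_mul _, huv.const_mul _,
        (hv.integrable_sq.const_mul _).add (huv.const_mul _), hu.integrable_sq]
    exact hexpand ▸ integral_nonneg fun ω => sq_nonneg _
  have hdisc := discrim_le_zero hquad
  rw [discrim] at hdisc
  linarith

theorem sq_covariance_le_variance_mul_variance [IsFiniteMeasure μ] {U V : Ω → ℝ}
    (hU : MemLp U 2 μ) (hV : MemLp V 2 μ) : cov[U, V; μ] ^ 2 ≤ Var[U; μ] * Var[V; μ] := by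
  rw [covariance, variance_eq_integral hU.aemeasurable, variance_eq_integral hV.aemeasurable]
  exact sq_integral_mul_le_integral_sq_mul_integral_sq (hU.sub (memLp_const _))
    (hV.sub (memLp_const _))

end CauchySchwarz

theorem memLp_of_forall_eq_zero_or_eq_one {Ω : Type*} {mΩ : MeasurableSpace Ω} {μ : Measure Ω}
    [IsFiniteMeasure μ] {Y : Ω → ℝ} (hY : Measurable Y) (hbin : ∀ ω, Y ω = 0 ∨ Y ω = 1)
    (p : ENNReal) : MemLp Y p μ :=
  .of_bound hY.aestronglyMeasurable 1
    (ae_of_all _ fun ω => by rcases hbin ω with h | h <;> simp [h])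

section Conditioning

variable {Ω : Type*} {m mΩ : MeasurableSpace Ω} {μ : Measure Ω} [IsProbabilityMeasure μ]

theorem covariance_eq_covariance_of_condExp_ae_eq (hm : m ≤ mΩ) {φ Y W : Ω → ℝ}
    (hφm : StronglyMeasurable[m] φ) (hφ : MemLp φ 2 μ) (hY : MemLp Y 2 μ) (hW : MemLp W 2 μ)
    (hce : μ[Y | m] =ᵐ[μ] W) : cov[φ, Y; μ] = cov[φ, W; μ] := by
  have hmean : μ[W] = μ[Y] := (integral_congr_ae hce).symm.trans (integral_condExp hm)
  have hprod : ∫ ω, φ ω * W ω ∂μ = ∫ ω, φ ω * Y ω ∂μ :=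
    calc ∫ ω, φ ω * W ω ∂μ = ∫ ω, φ ω * μ[Y | m] ω ∂μ :=
          integral_congr_ae ((Filter.EventuallyEq.refl _ φ).mul hce.symm)
      _ = ∫ ω, μ[φ * Y | m] ω ∂μ := (integral_congr_ae (condExp_mul_of_stronglyMeasurable_left
          hφm (hφ.integrable_mul hY) (hY.integrable one_le_two))).symm
      _ = ∫ ω, φ ω * Y ω ∂μ := integral_condExp hm
  rw [covariance_eq_sub hφ hY, covariance_eq_sub hφ hW, hmean]
  exact congrArg (· - _) hprod.symm

theorem variance_le_of_condExp_ae_eq (hm : m ≤ mΩ) {Y W : Ω → ℝ}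
    (hWm : StronglyMeasurable[m] W) (hY : MemLp Y 2 μ) (hW : MemLp W 2 μ)
    (hce : μ[Y | m] =ᵐ[μ] W) : Var[W; μ] ≤ Var[Y; μ] := by
  have hcs := sq_covariance_le_variance_mul_variance hW hY
  rw [covariance_eq_covariance_of_condExp_ae_eq hm hWm hW hY hW hce,
    covariance_self hW.aemeasurable, sq] at hcs
  rcases (variance_nonneg W μ).eq_or_lt with h | h
  · exact h ▸ variance_nonneg Y μ
  · exact le_of_mul_le_mul_left hcs h

theorem integral_mul_comp_le_of_binary (hm : m ≤ mΩ) {φ Y W : Ω → ℝ} {g : ℝ → ℝ}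
    (hφm : StronglyMeasurable[m] φ) (hY : Measurable Y) (hbin : ∀ ω, Y ω = 0 ∨ Y ω = 1)
    (hW : MemLp W 2 μ) (hce : μ[Y | m] =ᵐ[μ] W)
    (hφ0 : ∫ ω, φ ω ∂μ = 0) (hφ2 : ∫ ω, φ ω ^ 2 ∂μ = 1)
    (hg0 : ∫ ω, g (Y ω) ∂μ = 0) (hg2 : ∫ ω, g (Y ω) ^ 2 ∂μ = 1) :
    ∫ ω, φ ω * g (Y ω) ∂μ ≤ √Var[W; μ] / √Var[Y; μ] := by
  have hφ : MemLp φ 2 μ := (memLp_two_iff_integrable_sq (hφm.mono hm).aestronglyMeasurable).2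
    (.of_integral_ne_zero (hφ2 ▸ one_ne_zero))
  have hY2 : MemLp Y 2 μ := memLp_of_forall_eq_zero_or_eq_one hY hbin 2
  set c := g 1 - g 0
  have hgY : (fun ω => g (Y ω)) = fun ω => g 0 + c * Y ω :=
    funext fun ω => by rcases hbin ω with h | h <;> simp [h, c]
  have hvarφ : Var[φ; μ] = 1 := by rw [variance_of_integral_eq_zero hφ.aemeasurable hφ0, hφ2]
  have hvarg : c ^ 2 * Var[Y; μ] = 1 := by
    rw [← variance_const_mul, ← variance_const_add (hY.aestronglyMeasurable.const_mul c), ← hgY,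
      variance_of_integral_eq_zero (by rw [hgY]; fun_prop) hg0, hg2]
  have hcov : ∫ ω, φ ω * g (Y ω) ∂μ = c * cov[φ, W; μ] :=
    calc ∫ ω, φ ω * g (Y ω) ∂μ = cov[φ, fun ω => g (Y ω); μ] := by simp [covariance, hφ0, hg0]
      _ = c * cov[φ, Y; μ] := by
        rw [hgY, covariance_const_add_right (hY2.integrable one_le_two |>.const_mul c),
          covariance_const_mul_right]
      _ = c * cov[φ, W; μ] := by rw [covariance_eq_covariance_of_condExp_ae_eq hm hφm hφ hY2 hW hce]
  have hsq : (∫ ω, φ ω * g (Y ω) ∂μ) ^ 2 ≤ Var[W; μ] / Var[Y; μ] :=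
    calc (∫ ω, φ ω * g (Y ω) ∂μ) ^ 2 = c ^ 2 * cov[φ, W; μ] ^ 2 := by rw [hcov]; ring
      _ ≤ c ^ 2 * (Var[φ; μ] * Var[W; μ]) := by
        gcongr; exact sq_covariance_le_variance_mul_variance hφ hW
      _ = Var[W; μ] / Var[Y; μ] := by
        rw [hvarφ, one_mul, eq_div_iff fun h => by simp [h] at hvarg]
        linear_combination Var[W; μ] * hvarg
  rw [← Real.sqrt_div' _ (variance_nonneg Y μ)]
  exact (le_abs_self _).trans (Real.abs_le_sqrt hsq)

end Conditioning

section Standardize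

variable {Ω : Type*} {mΩ : MeasurableSpace Ω} {μ : Measure Ω}

noncomputable def standardize (Z : Ω → ℝ) (μ : Measure Ω) (ω : Ω) : ℝ :=
  (Z ω - μ[Z]) / √Var[Z; μ]

theorem integral_standardize [IsProbabilityMeasure μ] {Z : Ω → ℝ} (hZ : Integrable Z μ) :
    ∫ ω, standardize Z μ ω ∂μ = 0 := by
  simp [standardize, integral_div, integral_sub hZ (integrable_const _)]

theorem integral_standardize_sq {Z : Ω → ℝ} (hZ : AEMeasurable Z μ) (hvar : Var[Z; μ] ≠ 0) :
    ∫ ω, standardize Z μ ω ^ 2 ∂μ = 1 := by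
  simp_rw [standardize, div_pow, integral_div, ← variance_eq_integral hZ,
    Real.sq_sqrt (variance_nonneg Z μ)]
  exact div_self hvar

theorem integral_standardize_mul_standardize (U V : Ω → ℝ) :
    ∫ ω, standardize U μ ω * standardize V μ ω ∂μ = cov[U, V; μ] / (√Var[U; μ] * √Var[V; μ]) := by
  simp_rw [standardize, div_mul_div_comm, integral_div]
  rfl

theorem integral_standardize_mul_standardize_of_condExp_ae_eq {m : MeasurableSpace Ω}
    [IsProbabilityMeasure μ] (hm : m ≤ mΩ) {Y W : Ω → ℝ} (hWm : StronglyMeasurable[m] W)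
    (hY : MemLp Y 2 μ) (hW : MemLp W 2 μ) (hce : μ[Y | m] =ᵐ[μ] W) (hvar : Var[W; μ] ≠ 0) :
    ∫ ω, standardize W μ ω * standardize Y μ ω ∂μ = √Var[W; μ] / √Var[Y; μ] := by
  rw [integral_standardize_mul_standardize, covariance_eq_covariance_of_condExp_ae_eq hm hWm hW hY
    hW hce, covariance_self hW.aemeasurable]
  nth_rw 1 [← Real.mul_self_sqrt (variance_nonneg W μ)]
  exact mul_div_mul_left _ _ (Real.sqrt_ne_zero'.2 ((variance_nonneg W μ).lt_of_ne' hvar))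

end Standardize

theorem exists_sum_eq_sum_sub_div {ι β : Type*} [Fintype ι] [Nonempty ι] (f : ι → β → ℝ)
    (a b : ℝ) : ∃ ξ : ι → β → ℝ, ∀ x : ι → β, (∑ i, f i (x i) - a) / b = ∑ i, ξ i (x i) := by
  refine ⟨fun i y => (f i y - a / Fintype.card ι) / b, fun x => ?_⟩
  rw [← Finset.sum_div, Finset.sum_sub_distrib, Finset.sum_const, Finset.card_univ, nsmul_eq_mul,
    mul_div_cancel₀ _ (Nat.cast_ne_zero.2 Fintype.card_ne_zero)]

theorem hgr_eq_separable_lb_of_additive_condexp_general {Ω : Type*} [MeasurableSpace Ω]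
    (μ : Measure Ω) [IsProbabilityMeasure μ] (p m : ℕ)
    (X : Ω → (Fin p → Fin m)) (Y : Ω → ℝ) (hX : Measurable X) (hY : Measurable Y)
    (hbin : ∀ ω, Y ω = 0 ∨ Y ω = 1)
    (f : Fin p → Fin m → ℝ)
    (hce : μ[Y | MeasurableSpace.comap X inferInstance] =ᵐ[μ]
      fun ω => ∑ i, f i (X ω i))
    (hvar : 0 < variance (fun ω => ∑ i, f i (X ω i)) μ) :
    sSup {r : ℝ | ∃ F : (Fin p → Fin m) → ℝ, ∃ g : ℝ → ℝ,
        Measurable F ∧ Measurable g ∧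
        (∫ ω, F (X ω) ∂μ) = 0 ∧ (∫ ω, g (Y ω) ∂μ) = 0 ∧
        (∫ ω, (F (X ω)) ^ 2 ∂μ) = 1 ∧ (∫ ω, (g (Y ω)) ^ 2 ∂μ) = 1 ∧
        r = ∫ ω, F (X ω) * g (Y ω) ∂μ} =
      sSup {r : ℝ | ∃ F : (Fin p → Fin m) → ℝ, ∃ g : ℝ → ℝ,
        Measurable F ∧ Measurable g ∧
        (∃ ξ : Fin p → Fin m → ℝ, ∀ x, F x = ∑ i, ξ i (x i)) ∧
        (∫ ω, F (X ω) ∂μ) = 0 ∧ (∫ ω, g (Y ω) ∂μ) = 0 ∧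
        (∫ ω, (F (X ω)) ^ 2 ∂μ) = 1 ∧ (∫ ω, (g (Y ω)) ^ 2 ∂μ) = 1 ∧
        r = ∫ ω, F (X ω) * g (Y ω) ∂μ} := by
  set W : Ω → ℝ := fun ω => ∑ i, f i (X ω i)
  have hWm : StronglyMeasurable[MeasurableSpace.comap X inferInstance] W :=
    ((measurable_of_countable fun x : Fin p → Fin m => ∑ i, f i (x i)).comp
      (comap_measurable X)).stronglyMeasurable
  have hW : MemLp W 2 μ :=
    memLp_two_of_variance_ne_zero (hWm.mono hX.comap_le).aestronglyMeasurable hvar.ne'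
  have hY2 : MemLp Y 2 μ := memLp_of_forall_eq_zero_or_eq_one hY hbin 2
  have hvarY : Var[Y; μ] ≠ 0 :=
    (hvar.trans_le (variance_le_of_condExp_ae_eq hX.comap_le hWm hY2 hW hce)).ne'
  have : Nonempty (Fin p) := by
    rcases isEmpty_or_nonempty (Fin p) with h | h
    · simp [W, ← Pi.zero_def] at hvar
    · exact h
  refine csSup_eq_csSup_of_forall_exists_le ?_
    fun r ⟨F, g, hF, hg, _, h⟩ => ⟨r, ⟨F, g, hF, hg, h⟩, le_rfl⟩
  rintro r ⟨F, g, hF, -, hF0, hg0, hF2, hg2, rfl⟩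
  refine ⟨√Var[W; μ] / √Var[Y; μ], ⟨fun x => (∑ i, f i (x i) - ∫ ω, W ω ∂μ) / √Var[W; μ],
    fun y => (y - ∫ ω, Y ω ∂μ) / √Var[Y; μ], measurable_of_countable _, by fun_prop,
    exists_sum_eq_sum_sub_div f _ _, integral_standardize (hW.integrable one_le_two),
    integral_standardize (hY2.integrable one_le_two), integral_standardize_sq hW.aemeasurable
    hvar.ne', integral_standardize_sq hY2.aemeasurable hvarY,
    (integral_standardize_mul_standardize_of_condExp_ae_eq hX.comap_le hWm hY2 hW hce
    hvar.ne').symm⟩, ?_⟩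
  exact integral_mul_comp_le_of_binary hX.comap_le
    ((hF.comp (comap_measurable X)).stronglyMeasurable) hY hbin hW hce hF0 hF2 hg0 hg2

/-- If `Y` is binary and `E[Y | X]` is additively separable with positive variance,
then the HGR maximal correlation of `X = (X₁, …, X_p)` and `Y` equals the restricted
maximal correlation over additively separable functions `f(x) = ∑ i, ξ i (x i)`. -/
theorem hgr_eq_separable_lb_of_additive_condexp {Ω : Type*} [MeasurableSpace Ω]
    (μ : Measure Ω) [IsProbabilityMeasure μ] (p m : ℕ)
    (X : Ω → (Fin p → Fin m)) (Y : Ω → ℝ) (hX : Measurable X) (hY : Measurable Y)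
    (hbin : ∀ ω, Y ω = 0 ∨ Y ω = 1)
    (hp0 : 0 < (μ {ω | Y ω = 1}).toReal) (hp1 : (μ {ω | Y ω = 1}).toReal < 1)
    (f : Fin p → Fin m → ℝ)
    (hce : μ[Y | MeasurableSpace.comap X inferInstance] =ᵐ[μ]
      fun ω => ∑ i, f i (X ω i))
    (hvar : 0 < variance (fun ω => ∑ i, f i (X ω i)) μ) :
    sSup {r : ℝ | ∃ F : (Fin p → Fin m) → ℝ, ∃ g : ℝ → ℝ,
        Measurable F ∧ Measurable g ∧
        (∫ ω, F (X ω) ∂μ) = 0 ∧ (∫ ω, g (Y ω) ∂μ) = 0 ∧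
        (∫ ω, (F (X ω)) ^ 2 ∂μ) = 1 ∧ (∫ ω, (g (Y ω)) ^ 2 ∂μ) = 1 ∧
        r = ∫ ω, F (X ω) * g (Y ω) ∂μ} =
      sSup {r : ℝ | ∃ F : (Fin p → Fin m) → ℝ, ∃ g : ℝ → ℝ,
        Measurable F ∧ Measurable g ∧
        (∃ ξ : Fin p → Fin m → ℝ, ∀ x, F x = ∑ i, ξ i (x i)) ∧
        (∫ ω, F (X ω) ∂μ) = 0 ∧ (∫ ω, g (Y ω) ∂μ) = 0 ∧
        (∫ ω, (F (X ω)) ^ 2 ∂μ) = 1 ∧ (∫ ω, (g (Y ω)) ^ 2 ∂μ) = 1 ∧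
        r = ∫ ω, F (X ω) * g (Y ω) ∂μ} :=
  hgr_eq_separable_lb_of_additive_condexp_general μ p m X Y hX hY hbin f hce hvar
end

section
/- For p random variables X₁,…,X_p each uniformly distributed and mutually independent on {1,…,m}, the matrix Q ∈ ℝ^{pm×pm} with Q_{m(i−1)+k, m(j−1)+ℓ} = P(Xᵢ=k, Xⱼ=ℓ) (equal to 1/m² for i≠j and (1/m)·𝟙{k=ℓ} for i=j) has rank exactly (m−1)p + 1. -/
/-!
Writing `S` for the sum of all entries of `v` and `Sᵢ` for the sum over block `i`,
`(Q v)(i, k) = v(i, k)/m + (S - Sᵢ)/m²`. Hence `Q v = 0` forces `v(i, k) = (Sᵢ - S)/m`, so `v` is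
constant on each block, `v = c ∘ fst`; substituting back gives `S = 0`, i.e. `∑ c = 0`, and
conversely every such `v` lies in the kernel. The kernel is thus a copy of the sum-zero
hyperplane of `K^p`, of dimension `p - 1`, and rank–nullity gives `pm - (p - 1)`.
-/

open Matrix Module Fintype

variable {ι κ K : Type*} [Fintype ι] [Fintype κ] [DecidableEq ι] [DecidableEq κ] [Field K]

lemma finrank_ker_sum_add_one [Nonempty ι] :
    finrank K (LinearMap.ker (Fintype.linearCombination K fun _ : ι => (1 : K))) + 1 = card ι := by
  inhabit ι
  have hne : Fintype.linearCombination K (fun _ : ι => (1 : K)) ≠ 0 := fun h => by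
    simpa using LinearMap.congr_fun h (Pi.single default 1)
  rw [Module.Dual.finrank_ker_add_one_of_ne_zero hne, finrank_fintype_fun_eq_card]

namespace Matrix

variable (ι κ K) in
def uniformPairwise : Matrix (ι × κ) (ι × κ) K :=
  of fun q q' => if q.1 = q'.1 then (if q.2 = q'.2 then 1 / card κ else 0) else 1 / (card κ : K) ^ 2

lemma uniformPairwise_mulVec (v : ι × κ → K) (i : ι) (k : κ) :
    (uniformPairwise ι κ K *ᵥ v) (i, k) =
      v (i, k) / card κ + (∑ r, v r - ∑ l, v (i, l)) / card κ ^ 2 := by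
  have hrow : ∀ j, ∑ l, uniformPairwise ι κ K (i, k) (j, l) * v (j, l) =
      (if i = j then v (i, k) / card κ - (∑ l, v (i, l)) / card κ ^ 2 else 0) +
        (∑ l, v (j, l)) / card κ ^ 2 := by
    intro j
    rcases eq_or_ne i j with rfl | hij
    · simp only [uniformPairwise, one_div, of_apply, ↓reduceIte, ite_mul, zero_mul,
        Finset.sum_ite_eq, Finset.mem_univ, Finset.sum_div]
      ring
    · simp [uniformPairwise, hij, div_eq_inv_mul, Finset.mul_sum]
  rw [mulVec, dotProduct, Fintype.sum_prod_type, Finset.sum_congr rfl fun j _ => hrow j,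
    Finset.sum_add_distrib, Finset.sum_ite_eq, if_pos (Finset.mem_univ _),
    ← Finset.sum_div, ← Fintype.sum_prod_type]
  ring

lemma uniformPairwise_mulVec_eq_zero_iff (hκ : (card κ : K) ≠ 0) (v : ι × κ → K) :
    uniformPairwise ι κ K *ᵥ v = 0 ↔ ∃ c : ι → K, ∑ i, c i = 0 ∧ v = c ∘ Prod.fst := by
  constructor
  · intro hv
    have hcleared : ∀ i k, v (i, k) * card κ + (∑ r, v r - ∑ l, v (i, l)) = 0 := fun i k => by
      have := congrFun hv (i, k)
      rw [uniformPairwise_mulVec, Pi.zero_apply] at this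
      field_simp at this
      linear_combination this
    set c : ι → K := fun i => (∑ l, v (i, l) - ∑ r, v r) / card κ
    have hvc : ∀ i k, v (i, k) = c i := fun i k =>
      eq_div_of_mul_eq hκ (by linear_combination hcleared i k)
    have hblock : ∀ i, ∑ l, v (i, l) = card κ * c i := fun i => by
      simp [hvc i]
    have htotal : ∑ r, v r = 0 := by
      rcases isEmpty_or_nonempty (ι × κ) with _ | ⟨i, k⟩
      · exact Fintype.sum_empty _
      · linear_combination hcleared i k - card κ * hvc i k + hblock i
    refine ⟨c, ?_, funext fun q => hvc q.1 q.2⟩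
    rw [Fintype.sum_prod_type] at htotal
    simpa [hblock, ← Finset.mul_sum, hκ] using htotal
  · rintro ⟨c, hc, rfl⟩
    ext ⟨i, k⟩
    simp only [uniformPairwise_mulVec, Function.comp_apply, sum_prod_type, Finset.sum_const,
      Finset.card_univ, nsmul_eq_mul, ← Finset.mul_sum, hc, mul_zero, zero_sub, Pi.zero_apply]
    field_simp
    ring

lemma ker_mulVecLin_uniformPairwise (hκ : (card κ : K) ≠ 0) :
    LinearMap.ker (uniformPairwise ι κ K).mulVecLin =
      (LinearMap.ker (Fintype.linearCombination K fun _ : ι => (1 : K))).map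
        (LinearMap.funLeft K K Prod.fst) := by
  ext v
  simp [uniformPairwise_mulVec_eq_zero_iff hκ, Fintype.linearCombination_apply, eq_comm,
    LinearMap.funLeft]

lemma finrank_ker_mulVecLin_uniformPairwise [Nonempty ι] (hκ : (card κ : K) ≠ 0) :
    finrank K (LinearMap.ker (uniformPairwise ι κ K).mulVecLin) + 1 = card ι := by
  have : Nonempty κ := card_pos_iff.mp (Nat.pos_of_ne_zero fun h => hκ (by simp [h]))
  have hfst : Function.Injective (LinearMap.funLeft K K (Prod.fst : ι × κ → ι)) :=
    LinearMap.funLeft_injective_of_surjective K K _ Prod.fst_surjective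
  rw [ker_mulVecLin_uniformPairwise hκ,
    ← (Submodule.equivMapOfInjective _ hfst _).finrank_eq, finrank_ker_sum_add_one]

theorem rank_uniformPairwise [Nonempty ι] (hκ : (card κ : K) ≠ 0) :
    (uniformPairwise ι κ K).rank = (card κ - 1) * card ι + 1 := by
  have hnullity := (uniformPairwise ι κ K).mulVecLin.finrank_range_add_finrank_ker
  rw [finrank_fintype_fun_eq_card, card_prod] at hnullity
  have hker := finrank_ker_mulVecLin_uniformPairwise (ι := ι) hκ
  have : card ι ≤ card ι * card κ :=
    Nat.le_mul_of_pos_right _ (Nat.pos_of_ne_zero fun h => hκ (by simp [h]))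
  rw [Matrix.rank, Nat.sub_one_mul, mul_comm]
  omega

end Matrix

/-- For independent uniform `X₁, …, X_p` on `{1, …, m}`, the pairwise-marginal
matrix `Q` has rank exactly `(m-1)p + 1`. -/
theorem rank_uniform_pairwise_matrix (p m : ℕ) (hp : 0 < p) (hm : 0 < m) :
    (Matrix.of fun q q' : Fin p × Fin m =>
      if q.1 = q'.1 then (if q.2 = q'.2 then (1 : ℝ) / m else 0)
      else 1 / (m ^ 2 : ℝ)).rank = (m - 1) * p + 1 := by
  have : Nonempty (Fin p) := ⟨⟨0, hp⟩⟩
  simpa [uniformPairwise] using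
    rank_uniformPairwise (ι := Fin p) (κ := Fin m) (K := ℝ) (by simpa using hm.ne')
end

section
/- Let P̃ be the distribution on {0,1}³ with P̃(0,0,0)=0, P̃(0,0,1)=0.1, P̃(1,0,0)=0.2, P̃(1,0,1)=0.2, P̃(0,1,0)=0.1, P̃(0,1,1)=0.3, P̃(1,1,0)=0.1, P̃(1,1,1)=0. Then any distribution P on {0,1}³ with the same three pairwise marginals (of (X₁,X₂), (X₁,Y), (X₂,Y)) equals P̃; i.e., the class of distributions with these pairwise marginals is a singleton. -/
/-- The distribution `P̃` of Remark 2 on `{0,1}³` (coordinates `(X₁, X₂, Y)`,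
`true = 1`). -/
def Ptilde : Bool × Bool × Bool → ℝ := fun x =>
  match x with
  | (false, false, false) => 0
  | (false, false, true) => 0.1
  | (true, false, false) => 0.2
  | (true, false, true) => 0.2
  | (false, true, false) => 0.1
  | (false, true, true) => 0.3
  | (true, true, false) => 0.1
  | (true, true, true) => 0

/-- Any distribution on `{0,1}³` with the same three pairwise marginals as `P̃`
equals `P̃`: the class with these pairwise marginals is a singleton. -/
theorem pairwise_marginals_singleton (P : Bool × Bool × Bool → ℝ)
    (hnonneg : ∀ x, 0 ≤ P x) (hsum : ∑ x : Bool × Bool × Bool, P x = 1)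
    (h12 : ∀ a b : Bool, (∑ c : Bool, P (a, b, c)) = ∑ c : Bool, Ptilde (a, b, c))
    (h1Y : ∀ a c : Bool, (∑ b : Bool, P (a, b, c)) = ∑ b : Bool, Ptilde (a, b, c))
    (h2Y : ∀ b c : Bool, (∑ a : Bool, P (a, b, c)) = ∑ a : Bool, Ptilde (a, b, c)) :
    P = Ptilde := by
  have e12 := fun a b => h12 a b
  have A := h12 false false; have B := h12 false true; have C := h12 true false; have D := h12 true true
  have E := h1Y false false; have F := h1Y false true; have G := h1Y true false; have H := h1Y true true
  have I := h2Y false false; have J := h2Y false true; have K := h2Y true false; have L := h2Y true true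
  simp only [Fintype.sum_bool, Ptilde] at A B C D E F G H I J K L
  have n000 := hnonneg (false,false,false)
  have n111 := hnonneg (true,true,true)
  funext x
  obtain ⟨a,b,c⟩ := x
  cases a <;> cases b <;> cases c <;> simp only [Ptilde] <;> linarith
end
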